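/- Suppose 0 ≤ R ≤ C(supp(Q)). Then: (1) C(supp(Q)) ≤ R_{−1}^{−}(Q); (2) E_c(R,Q) = E_c^{ML}(R,Q), the minimum defining E_c^{ML}(R,Q) is attained at a unique joint distribution T̆∘V̆, and this pair also attains E_c(R,Q); (3) the marginal Q̆(x) = ∑_y T̆(y)V̆(x|y) satisfies supp(Q̆) = supp(Q). -/

import Mathlib

/-!
For `-1 < ρ ≤ 0` let `T_ρ∘V_ρ` be the tilted joint distribution
`T_ρ(y) V_ρ(x|y) ∝ Q(x) P(y|x)^{1/(1+ρ)} (∑_a Q(a) P(y|a)^{1/(1+ρ)})^ρ`. Whenever `T∘V ≪ Q∘P`,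

  `D(T∘V‖Q∘P) + ρ D(T∘V‖T×Q) = E₀(ρ,Q) + (1+ρ) D(T∘V‖T_ρ∘V_ρ) − ρ D(T‖T_ρ)`,

so, as `|R − d|⁺ ≥ −ρ (R − d)`, the objective of `E_c^{ML}(R,Q)` is at least `E₀(ρ,Q) − ρR`, with
equality only at `T_ρ∘V_ρ` and only if `ρ (D(T_ρ∘V_ρ‖T_ρ×Q) − R) = 0`. Such a `ρ` exists: `ρ = 0` if
`R ≤ I(Q∘P)`, and otherwise the rate `D(T_ρ∘V_ρ‖T_ρ×Q)` is continuous in `ρ`, equals `I(Q∘P)` at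
`ρ = 0` and tends to `D(T_{−1}∘V_{−1}‖T_{−1}×Q) > R` as `ρ → −1⁺`, where `V_{−1}(·|y)` is `Q`
conditioned on `argmax_{a ∈ supp Q} P(y|a)`.

The last inequality and part (1) both rest on the identity
`D(T_{−1}∘V‖T_{−1}×Q) = D(T_{−1}∘V‖Q∘P) + log ∑_y max_{a ∈ supp Q} P(y|a)` for admissible `V`,
and on the bound `I(Q'∘P) ≤ log ∑_y max_{a ∈ supp Q} P(y|a)` when `supp Q' ⊆ supp Q`.
-/

open scoped BigOperators
open Filter Topology

/-- `f` is a probability mass function on a finite alphabet. -/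
def IsPMF {α : Type*} [Fintype α] (f : α → ℝ) : Prop :=
  (∀ a, 0 ≤ f a) ∧ ∑ a, f a = 1

/-- `P` is a discrete memoryless channel from `𝓧` to `𝓨`. -/
def IsChannel {𝓧 𝓨 : Type*} [Fintype 𝓧] [Fintype 𝓨] (P : 𝓧 → 𝓨 → ℝ) : Prop :=
  ∀ x, IsPMF (P x)

/-- `V` is a conditional pmf on `𝓧` given `𝓨`. -/
def IsCondPMF {𝓧 𝓨 : Type*} [Fintype 𝓧] [Fintype 𝓨] (V : 𝓨 → 𝓧 → ℝ) : Prop :=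
  ∀ y, IsPMF (V y)

/-- one term `s·log(s/t)` of a KL divergence, with the conventions
    `0·log(0/t) = 0` and `s·log(s/0) = +∞` for `s > 0`. -/
noncomputable def klTerm (s t : ℝ) : EReal :=
  if s = 0 then 0 else if t = 0 then ⊤ else ((s * Real.log (s / t) : ℝ) : EReal)

/-- `D(T∘V ‖ Q∘P)`. -/
noncomputable def DQP {𝓧 𝓨 : Type*} [Fintype 𝓧] [Fintype 𝓨]
    (T : 𝓨 → ℝ) (V : 𝓨 → 𝓧 → ℝ) (Q : 𝓧 → ℝ) (P : 𝓧 → 𝓨 → ℝ) : EReal :=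
  ∑ y, ∑ x, klTerm (T y * V y x) (Q x * P x y)

/-- `D(T∘V ‖ T×Q)`. -/
noncomputable def DTQ {𝓧 𝓨 : Type*} [Fintype 𝓧] [Fintype 𝓨]
    (T : 𝓨 → ℝ) (V : 𝓨 → 𝓧 → ℝ) (Q : 𝓧 → ℝ) : EReal :=
  ∑ y, ∑ x, klTerm (T y * V y x) (T y * Q x)

/-- Gallager's function `E₀(ρ,Q)` (for `ρ > −1`). -/
noncomputable def E0 {𝓧 𝓨 : Type*} [Fintype 𝓧] [Fintype 𝓨]
    (ρ : ℝ) (Q : 𝓧 → ℝ) (P : 𝓧 → 𝓨 → ℝ) : ℝ :=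
  - Real.log (∑ y, (∑ x, Q x * P x y ^ (1 / (1 + ρ))) ^ (1 + ρ))

/-- The joint distribution `T_ρ∘V_ρ` on `𝓧 × 𝓨` (for `ρ > −1`). -/
noncomputable def Jrho {𝓧 𝓨 : Type*} [Fintype 𝓧] [Fintype 𝓨]
    (ρ : ℝ) (Q : 𝓧 → ℝ) (P : 𝓧 → 𝓨 → ℝ) (x : 𝓧) (y : 𝓨) : ℝ :=
  Q x * P x y ^ (1 / (1 + ρ)) * (∑ a, Q a * P a y ^ (1 / (1 + ρ))) ^ ρ /
    ∑ y', (∑ a, Q a * P a y' ^ (1 / (1 + ρ))) ^ (1 + ρ)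

/-- `max_{x : Q(x) > 0} P(y|x)`. -/
noncomputable def maxP {𝓧 𝓨 : Type*} (Q : 𝓧 → ℝ) (P : 𝓧 → 𝓨 → ℝ) (y : 𝓨) : ℝ :=
  ⨆ x : {x // 0 < Q x}, P x.1 y

/-- `E₀(−1,Q) = −log ∑_y max_{x : Q(x)>0} P(y|x)`. -/
noncomputable def E0m1 {𝓧 𝓨 : Type*} [Fintype 𝓧] [Fintype 𝓨]
    (Q : 𝓧 → ℝ) (P : 𝓧 → 𝓨 → ℝ) : ℝ :=
  - Real.log (∑ y, maxP Q P y)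

/-- `E₀(ρ,Q)` extended to `ρ = −1`. -/
noncomputable def E0full {𝓧 𝓨 : Type*} [Fintype 𝓧] [Fintype 𝓨]
    (ρ : ℝ) (Q : 𝓧 → ℝ) (P : 𝓧 → 𝓨 → ℝ) : ℝ :=
  if ρ = -1 then E0m1 Q P else E0 ρ Q P

/-- `T_{−1}(y) ∝ max_{a : Q(a)>0} P(y|a)`. -/
noncomputable def Tm1 {𝓧 𝓨 : Type*} [Fintype 𝓧] [Fintype 𝓨]
    (Q : 𝓧 → ℝ) (P : 𝓧 → 𝓨 → ℝ) (y : 𝓨) : ℝ :=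
  maxP Q P y / ∑ y', maxP Q P y'

/-- `V` is admissible at `ρ = −1`: `V(x|y) = 0` for every `x` outside
    `argmax_{a : Q(a)>0} P(y|a)`. -/
def AdmissibleAtM1 {𝓧 𝓨 : Type*} [Fintype 𝓧] [Fintype 𝓨]
    (Q : 𝓧 → ℝ) (P : 𝓧 → 𝓨 → ℝ) (V : 𝓨 → 𝓧 → ℝ) : Prop :=
  ∀ y x, ¬ (0 < Q x ∧ ∀ a, 0 < Q a → P a y ≤ P x y) → V y x = 0

/-- the error exponent `E_e(R,Q)`. -/
noncomputable def Ee {𝓧 𝓨 : Type*} [Fintype 𝓧] [Fintype 𝓨]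
    (R : ℝ) (Q : 𝓧 → ℝ) (P : 𝓧 → 𝓨 → ℝ) : EReal :=
  sInf {v | ∃ T : 𝓨 → ℝ, ∃ V : 𝓨 → 𝓧 → ℝ, IsPMF T ∧ IsCondPMF V ∧
    v = DQP T V Q P + max (DTQ T V Q - (R : EReal)) 0}

/-- the ML correct-decoding exponent `E_c^{ML}(R,Q)`. -/
noncomputable def EcML {𝓧 𝓨 : Type*} [Fintype 𝓧] [Fintype 𝓨]
    (R : ℝ) (Q : 𝓧 → ℝ) (P : 𝓧 → 𝓨 → ℝ) : EReal :=
  sInf {v | ∃ T : 𝓨 → ℝ, ∃ V : 𝓨 → 𝓧 → ℝ, IsPMF T ∧ IsCondPMF V ∧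
    v = DQP T V Q P + max ((R : EReal) - DTQ T V Q) 0}

/-- the strict correct-decoding exponent `E_c(R,Q)` (`+∞` if infeasible). -/
noncomputable def Ec {𝓧 𝓨 : Type*} [Fintype 𝓧] [Fintype 𝓨]
    (R : ℝ) (Q : 𝓧 → ℝ) (P : 𝓧 → 𝓨 → ℝ) : EReal :=
  sInf {v | ∃ T : 𝓨 → ℝ, ∃ V : 𝓨 → 𝓧 → ℝ, IsPMF T ∧ IsCondPMF V ∧
    (R : EReal) ≤ DTQ T V Q ∧ v = DQP T V Q P}

/-- the mutual information `I(Q∘P)`. -/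
noncomputable def MI {𝓧 𝓨 : Type*} [Fintype 𝓧] [Fintype 𝓨]
    (Q : 𝓧 → ℝ) (P : 𝓧 → 𝓨 → ℝ) : ℝ :=
  ∑ x, ∑ y, if Q x * P x y = 0 then 0
    else Q x * P x y * Real.log (P x y / ∑ a, Q a * P a y)

/-- the capacity `C(Z)` of the channel restricted to input letters in `Z`. -/
noncomputable def capacity {𝓧 𝓨 : Type*} [Fintype 𝓧] [Fintype 𝓨]
    (P : 𝓧 → 𝓨 → ℝ) (Z : Set 𝓧) : ℝ :=
  sSup {c | ∃ Q' : 𝓧 → ℝ, IsPMF Q' ∧ (∀ x, 0 < Q' x → x ∈ Z) ∧ c = MI Q' P}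

/-- `R_{−1}^{−}(Q)`. -/
noncomputable def Rm1minus {𝓧 𝓨 : Type*} [Fintype 𝓧] [Fintype 𝓨]
    (Q : 𝓧 → ℝ) (P : 𝓧 → 𝓨 → ℝ) : EReal :=
  sInf {v | ∃ V : 𝓨 → 𝓧 → ℝ, IsCondPMF V ∧ AdmissibleAtM1 Q P V ∧
    v = DTQ (Tm1 Q P) V Q}

/-- `R_{−1}^{+}(Q)`. -/
noncomputable def Rm1plus {𝓧 𝓨 : Type*} [Fintype 𝓧] [Fintype 𝓨]
    (Q : 𝓧 → ℝ) (P : 𝓧 → 𝓨 → ℝ) : EReal :=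
  sSup {v | ∃ V : 𝓨 → 𝓧 → ℝ, IsCondPMF V ∧ AdmissibleAtM1 Q P V ∧
    v = DTQ (Tm1 Q P) V Q}

/-- `F_ρ(T∘V, Q) = D(T∘V‖Q∘P) + ρ·D(T∘V‖T×Q)`. -/
noncomputable def Frho {𝓧 𝓨 : Type*} [Fintype 𝓧] [Fintype 𝓨]
    (ρ : ℝ) (T : 𝓨 → ℝ) (V : 𝓨 → 𝓧 → ℝ) (Q : 𝓧 → ℝ) (P : 𝓧 → 𝓨 → ℝ) : EReal :=
  DQP T V Q P + (ρ : EReal) * DTQ T V Q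

/-- the unconstrained penalized minimum
    `min_{T,V} { D(T∘V‖Q∘P) + ρ·(D(T∘V‖T×Q) − R) }`. -/
noncomputable def penMin {𝓧 𝓨 : Type*} [Fintype 𝓧] [Fintype 𝓨]
    (Q : 𝓧 → ℝ) (P : 𝓧 → 𝓨 → ℝ) (R ρ : ℝ) : EReal :=
  sInf {v | ∃ T : 𝓨 → ℝ, ∃ V : 𝓨 → 𝓧 → ℝ, IsPMF T ∧ IsCondPMF V ∧
    v = DQP T V Q P + (ρ : EReal) * (DTQ T V Q - (R : EReal))}

/-- the support-constrained penalized minimum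
    `min_{T,V : supp(V) ⊆ supp(Q)} { D(T∘V‖Q∘P) − ρ·(R − D(T∘V‖T×Q)) }`. -/
noncomputable def penMinS {𝓧 𝓨 : Type*} [Fintype 𝓧] [Fintype 𝓨]
    (Q : 𝓧 → ℝ) (P : 𝓧 → 𝓨 → ℝ) (R ρ : ℝ) : EReal :=
  sInf {v | ∃ T : 𝓨 → ℝ, ∃ V : 𝓨 → 𝓧 → ℝ, IsPMF T ∧ IsCondPMF V ∧
    (∀ y x, Q x = 0 → V y x = 0) ∧
    v = DQP T V Q P - (ρ : EReal) * ((R : EReal) - DTQ T V Q)}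

open Set

/-! ## `klReal` and Gibbs' inequality -/

noncomputable def klReal (s t : ℝ) : ℝ := if s = 0 then 0 else s * Real.log (s / t)

@[simp] lemma klReal_zero_left (t : ℝ) : klReal 0 t = 0 := if_pos rfl

@[simp] lemma klReal_self (s : ℝ) : klReal s s = 0 := by
  by_cases hs : s = 0
  · simp [hs]
  · simp [klReal, hs]

lemma klReal_of_ne_zero {s : ℝ} (hs : s ≠ 0) (t : ℝ) : klReal s t = s * Real.log (s / t) :=
  if_neg hs

lemma klReal_mul_mul (c s t : ℝ) : klReal (c * s) (c * t) = c * klReal s t := by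
  by_cases hc : c = 0
  · simp [hc]
  by_cases hs : s = 0
  · simp [hs]
  rw [klReal_of_ne_zero (mul_ne_zero hc hs), klReal_of_ne_zero hs, mul_div_mul_left _ _ hc]
  ring

lemma klReal_div_right {c s t : ℝ} (hc : 0 < c) (hst : s ≠ 0 → t ≠ 0) :
    klReal s (t / c) = klReal s t + s * Real.log c := by
  by_cases hs : s = 0
  · simp [hs]
  rw [klReal_of_ne_zero hs, klReal_of_ne_zero hs, div_div_eq_mul_div,
    mul_div_right_comm, Real.log_mul (div_ne_zero hs (hst hs)) hc.ne']
  ring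

lemma klReal_eq_neg_mul_log_div (s t : ℝ) : klReal s t = -(s * Real.log (t / s)) := by
  by_cases hs : s = 0
  · simp [hs]
  rw [klReal_of_ne_zero hs, ← inv_div, Real.log_inv]
  ring

-- `Real.log 0 = 0` makes `klReal s 0 = 0`, so there is no singularity at `t = 0` either.
lemma continuous_klReal_left (t : ℝ) : Continuous fun s => klReal s t := by
  by_cases ht : t = 0
  · simp only [klReal, ht, div_zero, Real.log_zero, mul_zero, ite_self]
    exact continuous_const
  have h : (fun s => klReal s t) = fun s => s * Real.log s - s * Real.log t := by
    funext s
    by_cases hs : s = 0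
    · simp [hs]
    rw [klReal_of_ne_zero hs, Real.log_div hs ht]
    ring
  rw [h]
  exact Real.continuous_mul_log.sub (continuous_id.mul continuous_const)

lemma sub_le_klReal {s t : ℝ} (hs : 0 ≤ s) (ht : 0 ≤ t) (hst : s ≠ 0 → t ≠ 0) :
    s - t ≤ klReal s t := by
  rcases hs.eq_or_lt with rfl | hs
  · simpa using ht
  have ht := ht.lt_of_ne' (hst hs.ne')
  have h := Real.one_sub_inv_le_log_of_pos (div_pos hs ht)
  rw [inv_div] at h
  rw [klReal_of_ne_zero hs.ne']
  have := mul_le_mul_of_nonneg_left h hs.le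
  rwa [mul_sub, mul_one, mul_div_cancel₀ _ hs.ne'] at this

lemma sub_lt_klReal {s t : ℝ} (hs : 0 ≤ s) (ht : 0 ≤ t) (hst : s ≠ 0 → t ≠ 0) (hne : s ≠ t) :
    s - t < klReal s t := by
  rcases hs.eq_or_lt with rfl | hs
  · simpa using ht.lt_of_ne hne
  have ht := ht.lt_of_ne' (hst hs.ne')
  have h := Real.log_lt_sub_one_of_pos (div_pos ht hs) (by
    rw [Ne, div_eq_one_iff_eq hs.ne']; exact hne.symm)
  rw [klReal_eq_neg_mul_log_div]
  have := mul_lt_mul_of_pos_left h hs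
  rw [mul_sub, mul_one, mul_div_cancel₀ _ hs.ne'] at this
  linarith

section Gibbs

variable {ι : Type*} [Fintype ι] {s t : ι → ℝ}

lemma sum_klReal_nonneg (hs : ∀ i, 0 ≤ s i) (ht : ∀ i, 0 ≤ t i) (hst : ∀ i, s i ≠ 0 → t i ≠ 0)
    (hsum : ∑ i, t i ≤ ∑ i, s i) : 0 ≤ ∑ i, klReal (s i) (t i) := by
  have := Finset.sum_le_sum fun i (_ : i ∈ Finset.univ) => sub_le_klReal (hs i) (ht i) (hst i)
  rw [Finset.sum_sub_distrib] at this
  linarith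

lemma eq_of_sum_klReal_nonpos (hs : ∀ i, 0 ≤ s i) (ht : ∀ i, 0 ≤ t i)
    (hst : ∀ i, s i ≠ 0 → t i ≠ 0) (hsum : ∑ i, t i ≤ ∑ i, s i)
    (hkl : ∑ i, klReal (s i) (t i) ≤ 0) : s = t := by
  by_contra hne
  obtain ⟨j, hj⟩ := Function.ne_iff.1 hne
  have := Finset.sum_lt_sum (fun i (_ : i ∈ Finset.univ) => sub_le_klReal (hs i) (ht i) (hst i))
    ⟨j, Finset.mem_univ j, sub_lt_klReal (hs j) (ht j) (hst j) hj⟩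
  rw [Finset.sum_sub_distrib] at this
  linarith

lemma neg_log_sum_le_sum_klReal (hs : ∀ i, 0 ≤ s i) (hs1 : ∑ i, s i = 1) (ht : ∀ i, 0 ≤ t i)
    (hst : ∀ i, s i ≠ 0 → t i ≠ 0) : -Real.log (∑ i, t i) ≤ ∑ i, klReal (s i) (t i) := by
  obtain ⟨j, hj⟩ : ∃ j, s j ≠ 0 := by
    by_contra! h
    simp [h] at hs1
  have hT : 0 < ∑ i, t i :=
    ((ht j).lt_of_ne' (hst j hj)).trans_le
      (Finset.single_le_sum (fun i _ => ht i) (Finset.mem_univ j))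
  have h := sum_klReal_nonneg hs (fun i => div_nonneg (ht i) hT.le)
    (fun i hi => div_ne_zero (hst i hi) hT.ne') (by rw [← Finset.sum_div, div_self hT.ne', hs1])
  rw [Finset.sum_congr rfl fun i _ => klReal_div_right hT (hst i), Finset.sum_add_distrib,
    ← Finset.sum_mul, hs1, one_mul] at h
  linarith

end Gibbs

lemma EReal.coe_finset_sum {ι : Type*} (s : Finset ι) (f : ι → ℝ) :
    ((∑ i ∈ s, f i : ℝ) : EReal) = ∑ i ∈ s, (f i : EReal) :=
  map_sum (⟨⟨(↑), EReal.coe_zero⟩, EReal.coe_add⟩ : ℝ →+ EReal) f s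

lemma EReal.finset_sum_ne_bot {ι : Type*} (s : Finset ι) {f : ι → EReal} (h : ∀ i, f i ≠ ⊥) :
    ∑ i ∈ s, f i ≠ ⊥ := by
  induction s using Finset.cons_induction with
  | empty => simp
  | cons a s _ ih =>
    rw [Finset.sum_cons]
    exact fun hbot => (EReal.add_eq_bot_iff.1 hbot).elim (h a) ih

lemma klTerm_ne_bot (s t : ℝ) : klTerm s t ≠ ⊥ := by
  unfold klTerm
  split_ifs
  exacts [EReal.zero_ne_bot, top_ne_bot, EReal.coe_ne_bot _]

lemma klTerm_eq_coe {s t : ℝ} (hst : s ≠ 0 → t ≠ 0) : klTerm s t = klReal s t := by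
  unfold klTerm klReal
  by_cases hs : s = 0
  · simp [hs]
  · simp [hs, hst hs]

section Pairs

variable {α β : Type*} [Fintype α] [Fintype β] {s t : α → β → ℝ}

lemma sum_sum_klTerm_eq_coe (hst : ∀ a b, s a b ≠ 0 → t a b ≠ 0) :
    ∑ a, ∑ b, klTerm (s a b) (t a b) = ((∑ a, ∑ b, klReal (s a b) (t a b) : ℝ) : EReal) := by
  simp only [EReal.coe_finset_sum, klTerm_eq_coe (hst _ _)]

lemma sum_sum_klTerm_eq_top {a : α} {b : β} (hs : s a b ≠ 0) (ht : t a b = 0) :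
    ∑ a, ∑ b, klTerm (s a b) (t a b) = ⊤ := by
  classical
  have hab : klTerm (s a b) (t a b) = ⊤ := by simp [klTerm, hs, ht]
  rw [← Finset.add_sum_erase _ _ (Finset.mem_univ a),
    ← Finset.add_sum_erase _ _ (Finset.mem_univ b), hab,
    EReal.top_add_of_ne_bot (EReal.finset_sum_ne_bot _ fun _ => klTerm_ne_bot _ _),
    EReal.top_add_of_ne_bot (EReal.finset_sum_ne_bot _ fun _ =>
      EReal.finset_sum_ne_bot _ fun _ => klTerm_ne_bot _ _)]

lemma sum_sum_klReal_nonneg (hs : ∀ a b, 0 ≤ s a b) (ht : ∀ a b, 0 ≤ t a b)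
    (hst : ∀ a b, s a b ≠ 0 → t a b ≠ 0) (hsum : ∑ a, ∑ b, t a b ≤ ∑ a, ∑ b, s a b) :
    0 ≤ ∑ a, ∑ b, klReal (s a b) (t a b) := by
  simp only [← Fintype.sum_prod_type'] at hsum ⊢
  exact sum_klReal_nonneg (fun p : α × β => hs p.1 p.2) (fun p => ht p.1 p.2)
    (fun p => hst p.1 p.2) hsum

lemma eq_of_sum_sum_klReal_nonpos (hs : ∀ a b, 0 ≤ s a b) (ht : ∀ a b, 0 ≤ t a b)
    (hst : ∀ a b, s a b ≠ 0 → t a b ≠ 0) (hsum : ∑ a, ∑ b, t a b ≤ ∑ a, ∑ b, s a b)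
    (hkl : ∑ a, ∑ b, klReal (s a b) (t a b) ≤ 0) : s = t := by
  simp only [← Fintype.sum_prod_type'] at hsum hkl
  have h := eq_of_sum_klReal_nonpos (fun p : α × β => hs p.1 p.2) (fun p => ht p.1 p.2)
    (fun p => hst p.1 p.2) hsum hkl
  exact funext₂ fun a b => congrFun h (a, b)

end Pairs

lemma IsPMF.exists_pos {α : Type*} [Fintype α] {f : α → ℝ} (hf : IsPMF f) : ∃ a, 0 < f a := by
  by_contra! h
  have := hf.2
  rw [Finset.sum_eq_zero fun a _ => le_antisymm (h a) (hf.1 a)] at this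
  exact zero_ne_one this

lemma pos_and_pos_of_mul_ne_zero {a b : ℝ} (ha : 0 ≤ a) (hb : 0 ≤ b) (h : a * b ≠ 0) :
    0 < a ∧ 0 < b :=
  ⟨ha.lt_of_ne' (left_ne_zero_of_mul h), hb.lt_of_ne' (right_ne_zero_of_mul h)⟩

lemma continuousOn_rpow_one_div_one_add (a : ℝ) :
    ContinuousOn (fun ρ : ℝ => a ^ (1 / (1 + ρ))) (Ioi (-1)) :=
  continuousOn_const.rpow (continuousOn_const.div (continuousOn_const.add continuousOn_id)
    fun ρ (hρ : -1 < ρ) => by linarith) fun ρ (hρ : -1 < ρ) => Or.inr (one_div_pos.2 (by linarith))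

lemma tendsto_one_div_one_add : Tendsto (fun ρ : ℝ => 1 / (1 + ρ)) (𝓝[>] (-1)) atTop := by
  have h : Tendsto (fun ρ : ℝ => 1 + ρ) (𝓝[>] (-1)) (𝓝[>] 0) := by
    refine tendsto_nhdsWithin_of_tendsto_nhds_of_eventually_within _ ?_ ?_
    · exact ((continuous_const.add continuous_id).tendsto' (-1) 0 (by norm_num)).mono_left
        nhdsWithin_le_nhds
    · exact eventually_mem_nhdsWithin.mono fun ρ (hρ : -1 < ρ) => show 0 < 1 + ρ by linarith
  simpa only [one_div, Function.comp_def] using tendsto_inv_nhdsGT_zero.comp h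

lemma tendsto_rpow_one_div_one_add {r : ℝ} (h0 : 0 ≤ r) (h1 : r ≤ 1) :
    Tendsto (fun ρ : ℝ => r ^ (1 / (1 + ρ))) (𝓝[>] (-1)) (𝓝 (if r = 1 then 1 else 0)) := by
  split_ifs with hr
  · simp [hr]
  · exact (tendsto_rpow_atTop_of_base_lt_one r (by linarith) (h1.lt_of_ne hr)).comp
      tendsto_one_div_one_add

lemma tendsto_rpow_one_add {q : ℝ} (hq : 0 < q) :
    Tendsto (fun ρ : ℝ => q ^ (1 + ρ)) (𝓝[>] (-1)) (𝓝 1) := by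
  have h : ContinuousAt (fun ρ : ℝ => q ^ (1 + ρ)) (-1) :=
    (Real.continuousAt_const_rpow hq.ne').comp (continuous_const.add continuous_id).continuousAt
  replace h := h.tendsto
  norm_num at h
  exact h.mono_left nhdsWithin_le_nhds

/-! ## Divergences of joint distributions -/

def AbsCont {𝓧 𝓨 : Type*} (T : 𝓨 → ℝ) (V : 𝓨 → 𝓧 → ℝ) (Q : 𝓧 → ℝ) (P : 𝓧 → 𝓨 → ℝ) : Prop :=
  ∀ y x, T y * V y x ≠ 0 → Q x * P x y ≠ 0

lemma AbsCont.ne_zero_TQ {𝓧 𝓨 : Type*} {T : 𝓨 → ℝ} {V : 𝓨 → 𝓧 → ℝ} {Q : 𝓧 → ℝ}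
    {P : 𝓧 → 𝓨 → ℝ} (hac : AbsCont T V Q P) :
    ∀ y x, T y * V y x ≠ 0 → T y * Q x ≠ 0 := fun y x h =>
  mul_ne_zero (left_ne_zero_of_mul h) (left_ne_zero_of_mul (hac y x h))

section

variable {𝓧 𝓨 : Type*} [Fintype 𝓧] [Fintype 𝓨] {P : 𝓧 → 𝓨 → ℝ} {Q : 𝓧 → ℝ}
  {T : 𝓨 → ℝ} {V : 𝓨 → 𝓧 → ℝ}

noncomputable def DQPReal (T : 𝓨 → ℝ) (V : 𝓨 → 𝓧 → ℝ) (Q : 𝓧 → ℝ) (P : 𝓧 → 𝓨 → ℝ) : ℝ :=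
  ∑ y, ∑ x, klReal (T y * V y x) (Q x * P x y)

noncomputable def DTQReal (T : 𝓨 → ℝ) (V : 𝓨 → 𝓧 → ℝ) (Q : 𝓧 → ℝ) : ℝ :=
  ∑ y, ∑ x, klReal (T y * V y x) (T y * Q x)

lemma joint_nonneg (hT : IsPMF T) (hV : IsCondPMF V) (y : 𝓨) (x : 𝓧) : 0 ≤ T y * V y x :=
  mul_nonneg (hT.1 y) ((hV y).1 x)

lemma sum_joint_eq (T : 𝓨 → ℝ) (hV : IsCondPMF V) (y : 𝓨) : ∑ x, T y * V y x = T y := by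
  rw [← Finset.mul_sum, (hV y).2, mul_one]

lemma sum_sum_joint_eq_one (hT : IsPMF T) (hV : IsCondPMF V) : ∑ y, ∑ x, T y * V y x = 1 := by
  simp only [sum_joint_eq T hV, hT.2]

lemma sum_sum_QP_eq_one (hP : IsChannel P) (hQ : IsPMF Q) : ∑ y, ∑ x, Q x * P x y = 1 := by
  rw [Finset.sum_comm]
  simp only [← Finset.mul_sum, (hP _).2, mul_one, hQ.2]

lemma QP_nonneg (hP : IsChannel P) (hQ : IsPMF Q) (y : 𝓨) (x : 𝓧) : 0 ≤ Q x * P x y :=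
  mul_nonneg (hQ.1 x) ((hP x).1 y)

lemma DQP_eq_coe (hac : AbsCont T V Q P) : DQP T V Q P = DQPReal T V Q P :=
  sum_sum_klTerm_eq_coe hac

lemma DTQ_eq_coe (hac : AbsCont T V Q P) : DTQ T V Q = DTQReal T V Q :=
  sum_sum_klTerm_eq_coe hac.ne_zero_TQ

lemma DQP_eq_top (hac : ¬ AbsCont T V Q P) : DQP T V Q P = ⊤ := by
  simp only [AbsCont, not_forall, not_not, exists_prop] at hac
  obtain ⟨y, x, hs, ht⟩ := hac
  exact sum_sum_klTerm_eq_top hs ht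

lemma DQPReal_nonneg (hP : IsChannel P) (hQ : IsPMF Q) (hT : IsPMF T) (hV : IsCondPMF V)
    (hac : AbsCont T V Q P) : 0 ≤ DQPReal T V Q P :=
  sum_sum_klReal_nonneg (joint_nonneg hT hV) (QP_nonneg hP hQ) hac
    (by rw [sum_sum_joint_eq_one hT hV, sum_sum_QP_eq_one hP hQ])

lemma joint_eq_QP_of_DQPReal_nonpos (hP : IsChannel P) (hQ : IsPMF Q) (hT : IsPMF T)
    (hV : IsCondPMF V) (hac : AbsCont T V Q P) (h : DQPReal T V Q P ≤ 0) (y : 𝓨) (x : 𝓧) :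
    T y * V y x = Q x * P x y :=
  congrFun₂ (eq_of_sum_sum_klReal_nonpos (joint_nonneg hT hV) (QP_nonneg hP hQ) hac
    (by rw [sum_sum_joint_eq_one hT hV, sum_sum_QP_eq_one hP hQ]) h) y x

lemma DTQReal_eq_sum (T : 𝓨 → ℝ) (V : 𝓨 → 𝓧 → ℝ) (Q : 𝓧 → ℝ) :
    DTQReal T V Q = ∑ y, T y * ∑ x, klReal (V y x) (Q x) := by
  simp only [DTQReal, klReal_mul_mul, Finset.mul_sum]

lemma DTQReal_eq_MI (hP : IsChannel P) (hQ : IsPMF Q) (hV : IsCondPMF V)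
    (hjoint : ∀ y x, T y * V y x = Q x * P x y) : DTQReal T V Q = MI Q P := by
  have hT : ∀ y, T y = ∑ a, Q a * P a y := fun y => by
    rw [← sum_joint_eq T hV y, Finset.sum_congr rfl fun x _ => hjoint y x]
  rw [MI, Finset.sum_comm, DTQReal]
  refine Finset.sum_congr rfl fun y _ => Finset.sum_congr rfl fun x _ => ?_
  rw [hjoint, hT]
  split_ifs with h
  · simp [h]
  obtain ⟨hQx, -⟩ := pos_and_pos_of_mul_ne_zero (hQ.1 x) ((hP x).1 y) h
  rw [klReal_of_ne_zero h, mul_comm (∑ a, Q a * P a y), mul_div_mul_left _ _ hQx.ne']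

noncomputable def ecMLObjective (R : ℝ) (Q : 𝓧 → ℝ) (P : 𝓧 → 𝓨 → ℝ) (T : 𝓨 → ℝ)
    (V : 𝓨 → 𝓧 → ℝ) : EReal :=
  DQP T V Q P + max ((R : EReal) - DTQ T V Q) 0

lemma ecMLObjective_eq_coe (R : ℝ) (hac : AbsCont T V Q P) :
    ecMLObjective R Q P T V = ((DQPReal T V Q P + max (R - DTQReal T V Q) 0 : ℝ) : EReal) := by
  rw [ecMLObjective, DQP_eq_coe hac, DTQ_eq_coe hac, EReal.coe_add,
    EReal.coe_strictMono.monotone.map_max, EReal.coe_sub, EReal.coe_zero]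

lemma ecMLObjective_eq_top (R : ℝ) (hac : ¬ AbsCont T V Q P) : ecMLObjective R Q P T V = ⊤ := by
  rw [ecMLObjective, DQP_eq_top hac]
  exact EReal.top_add_of_ne_bot (ne_bot_of_le_ne_bot EReal.zero_ne_bot (le_max_right _ _))

lemma ecMLObjective_of_le {R : ℝ} (hR : (R : EReal) ≤ DTQ T V Q) :
    ecMLObjective R Q P T V = DQP T V Q P := by
  rw [ecMLObjective, max_eq_right (EReal.sub_nonpos.2 hR), add_zero]

lemma EcML_eq_and_Ec_eq {R : ℝ} (hT : IsPMF T) (hV : IsCondPMF V) (hR : (R : EReal) ≤ DTQ T V Q)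
    (hmin : ∀ T' V', IsPMF T' → IsCondPMF V' → DQP T V Q P ≤ ecMLObjective R Q P T' V') :
    EcML R Q P = DQP T V Q P ∧ Ec R Q P = DQP T V Q P := by
  refine ⟨le_antisymm (sInf_le ⟨T, V, hT, hV, (ecMLObjective_of_le hR).symm⟩) (le_sInf ?_),
    le_antisymm (sInf_le ⟨T, V, hT, hV, hR, rfl⟩) (le_sInf ?_)⟩
  · rintro _ ⟨T', V', hT', hV', rfl⟩
    exact hmin T' V' hT' hV'
  · rintro _ ⟨T', V', hT', hV', hR', rfl⟩
    exact ecMLObjective_of_le hR' ▸ hmin T' V' hT' hV'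

end

/-! ## Maximal transition probabilities and `C(supp Q) ≤ R_{−1}^{−}(Q)` -/

def IsArgmax {𝓧 𝓨 : Type*} (Q : 𝓧 → ℝ) (P : 𝓧 → 𝓨 → ℝ) (y : 𝓨) (x : 𝓧) : Prop :=
  0 < Q x ∧ ∀ a, 0 < Q a → P a y ≤ P x y

section

variable {𝓧 𝓨 : Type*} [Fintype 𝓧] {P : 𝓧 → 𝓨 → ℝ} {Q : 𝓧 → ℝ}

lemma exists_isArgmax (hQ : IsPMF Q) (y : 𝓨) : ∃ x, IsArgmax Q P y x ∧ P x y = maxP Q P y := by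
  obtain ⟨x, hx⟩ := hQ.exists_pos
  have : Nonempty {x // 0 < Q x} := ⟨⟨x, hx⟩⟩
  obtain ⟨a, ha⟩ := Finite.exists_max fun a : {x // 0 < Q x} => P a.1 y
  exact ⟨a.1, ⟨a.2, fun b hb => ha ⟨b, hb⟩⟩,
    le_antisymm (le_ciSup (f := fun a : {x // 0 < Q x} => P a.1 y) (Finite.bddAbove_range _) a)
      (ciSup_le ha)⟩

lemma le_maxP (hQ : IsPMF Q) {x : 𝓧} (hx : 0 < Q x) (y : 𝓨) : P x y ≤ maxP Q P y := by
  obtain ⟨a, ha, hPa⟩ := exists_isArgmax (P := P) hQ y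
  exact hPa ▸ ha.2 x hx

lemma IsArgmax.eq_maxP (hQ : IsPMF Q) {y : 𝓨} {x : 𝓧} (h : IsArgmax Q P y x) :
    P x y = maxP Q P y := by
  obtain ⟨a, ha, hPa⟩ := exists_isArgmax (P := P) hQ y
  exact le_antisymm (le_maxP hQ h.1 y) (hPa ▸ h.2 a ha.1)

lemma isArgmax_iff (hQ : IsPMF Q) {y : 𝓨} {x : 𝓧} (hx : 0 < Q x) :
    IsArgmax Q P y x ↔ P x y = maxP Q P y :=
  ⟨IsArgmax.eq_maxP hQ, fun h => ⟨hx, fun _ ha => h ▸ le_maxP hQ ha y⟩⟩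

lemma maxP_nonneg [Fintype 𝓨] (hP : IsChannel P) (hQ : IsPMF Q) (y : 𝓨) : 0 ≤ maxP Q P y := by
  obtain ⟨a, -, hPa⟩ := exists_isArgmax (P := P) hQ y
  exact hPa ▸ (hP a).1 y

lemma maxP_pos_iff (hQ : IsPMF Q) (y : 𝓨) : 0 < maxP Q P y ↔ ∃ x, 0 < Q x ∧ 0 < P x y := by
  obtain ⟨a, ha, hPa⟩ := exists_isArgmax (P := P) hQ y
  exact ⟨fun h => ⟨a, ha.1, hPa ▸ h⟩, fun ⟨x, hx, hPx⟩ => hPx.trans_le (le_maxP hQ hx y)⟩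

open Classical in
noncomputable def argmaxQ (Q : 𝓧 → ℝ) (P : 𝓧 → 𝓨 → ℝ) (y : 𝓨) (x : 𝓧) : ℝ :=
  if IsArgmax Q P y x then Q x else 0

noncomputable def Vm1 (Q : 𝓧 → ℝ) (P : 𝓧 → 𝓨 → ℝ) (y : 𝓨) (x : 𝓧) : ℝ :=
  argmaxQ Q P y x / ∑ a, argmaxQ Q P y a

lemma argmaxQ_nonneg (hQ : IsPMF Q) (y : 𝓨) (x : 𝓧) : 0 ≤ argmaxQ Q P y x := by
  unfold argmaxQ
  split_ifs
  exacts [hQ.1 x, le_rfl]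

lemma sum_argmaxQ_pos (hQ : IsPMF Q) (y : 𝓨) : 0 < ∑ x, argmaxQ Q P y x := by
  obtain ⟨x, hx, -⟩ := exists_isArgmax (P := P) hQ y
  exact Finset.sum_pos' (fun a _ => argmaxQ_nonneg hQ y a)
    ⟨x, Finset.mem_univ x, by simpa [argmaxQ, hx] using hx.1⟩

end

section

variable {𝓧 𝓨 : Type*} [Fintype 𝓧] [Fintype 𝓨] {P : 𝓧 → 𝓨 → ℝ} {Q : 𝓧 → ℝ}
  {V : 𝓨 → 𝓧 → ℝ}

noncomputable def maxPSum (Q : 𝓧 → ℝ) (P : 𝓧 → 𝓨 → ℝ) : ℝ := ∑ y, maxP Q P y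

lemma one_le_maxPSum (hP : IsChannel P) (hQ : IsPMF Q) : 1 ≤ maxPSum Q P := by
  obtain ⟨x, hx⟩ := hQ.exists_pos
  rw [← (hP x).2]
  exact Finset.sum_le_sum fun y _ => le_maxP hQ hx y

lemma maxPSum_pos (hP : IsChannel P) (hQ : IsPMF Q) : 0 < maxPSum Q P :=
  one_pos.trans_le (one_le_maxPSum hP hQ)

lemma Tm1_apply (y : 𝓨) : Tm1 Q P y = maxP Q P y / maxPSum Q P := rfl

lemma Tm1_pmf (hP : IsChannel P) (hQ : IsPMF Q) : IsPMF (Tm1 Q P) :=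
  ⟨fun y => div_nonneg (maxP_nonneg hP hQ y) (maxPSum_pos hP hQ).le, by
    simp only [Tm1_apply, ← Finset.sum_div]; exact div_self (maxPSum_pos hP hQ).ne'⟩

lemma isArgmax_of_admissible (hadm : AdmissibleAtM1 Q P V) {y : 𝓨} {x : 𝓧} (hV : V y x ≠ 0) :
    IsArgmax Q P y x :=
  not_not.1 (mt (hadm y x) hV)

lemma absCont_Tm1_of_admissible (hQ : IsPMF Q) (hadm : AdmissibleAtM1 Q P V) :
    AbsCont (Tm1 Q P) V Q P := fun y x h => by
  have hx := isArgmax_of_admissible hadm (right_ne_zero_of_mul h)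
  have hmax : maxP Q P y ≠ 0 := fun h0 => left_ne_zero_of_mul h (by rw [Tm1_apply, h0, zero_div])
  exact mul_ne_zero hx.1.ne' (hx.eq_maxP hQ ▸ hmax)

lemma DTQReal_Tm1_eq (hP : IsChannel P) (hQ : IsPMF Q) (hV : IsCondPMF V)
    (hadm : AdmissibleAtM1 Q P V) :
    DTQReal (Tm1 Q P) V Q = DQPReal (Tm1 Q P) V Q P + Real.log (maxPSum Q P) := by
  have hac := absCont_Tm1_of_admissible hQ hadm
  have hterm : ∀ y x, klReal (Tm1 Q P y * V y x) (Tm1 Q P y * Q x) =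
      klReal (Tm1 Q P y * V y x) (Q x * P x y) + Tm1 Q P y * V y x * Real.log (maxPSum Q P) := by
    intro y x
    by_cases hs : Tm1 Q P y * V y x = 0
    · simp [hs]
    have hPx := (isArgmax_of_admissible hadm (right_ne_zero_of_mul hs)).eq_maxP hQ
    have hTQ : Tm1 Q P y * Q x = Q x * P x y / maxPSum Q P := by rw [Tm1_apply, hPx]; ring
    rw [hTQ, klReal_div_right (maxPSum_pos hP hQ) (hac y x)]
  simp only [DTQReal, DQPReal, hterm, Finset.sum_add_distrib, ← Finset.sum_mul,
    sum_sum_joint_eq_one (Tm1_pmf hP hQ) hV, one_mul]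

lemma MI_le_log_maxPSum (hP : IsChannel P) (hQ : IsPMF Q) {Q' : 𝓧 → ℝ} (hQ' : IsPMF Q')
    (hsupp : ∀ x, 0 < Q' x → 0 < Q x) : MI Q' P ≤ Real.log (maxPSum Q P) := by
  set m : 𝓨 → ℝ := fun y => ∑ a, Q' a * P a y
  have hm_ge : ∀ x y, Q' x * P x y ≤ m y := fun x y =>
    Finset.single_le_sum (fun a _ => QP_nonneg hP hQ' y a) (Finset.mem_univ x)
  have hmax : ∀ y, m y ≠ 0 → maxP Q P y ≠ 0 := by
    intro y hy
    obtain ⟨x, -, hx⟩ := Finset.exists_ne_zero_of_sum_ne_zero hy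
    obtain ⟨hQ'x, hPx⟩ := pos_and_pos_of_mul_ne_zero (hQ'.1 x) ((hP x).1 y) hx
    exact (hPx.trans_le (le_maxP hQ (hsupp x hQ'x) y)).ne'
  have hterm : ∀ x y, (if Q' x * P x y = 0 then 0 else Q' x * P x y * Real.log (P x y / m y))
      ≤ Q' x * P x y * Real.log (maxP Q P y / m y) := by
    intro x y
    split_ifs with h
    · simp [h]
    obtain ⟨hQ'x, hPx⟩ := pos_and_pos_of_mul_ne_zero (hQ'.1 x) ((hP x).1 y) h
    have hmy := (mul_pos hQ'x hPx).trans_le (hm_ge x y)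
    gcongr
    exact le_maxP hQ (hsupp x hQ'x) y
  have hgibbs := neg_log_sum_le_sum_klReal
    (fun y => Finset.sum_nonneg fun a _ => QP_nonneg hP hQ' y a) (sum_sum_QP_eq_one hP hQ')
    (maxP_nonneg hP hQ) hmax
  calc MI Q' P ≤ ∑ x, ∑ y, Q' x * P x y * Real.log (maxP Q P y / m y) :=
        Finset.sum_le_sum fun x _ => Finset.sum_le_sum fun y _ => hterm x y
    _ = -∑ y, klReal (m y) (maxP Q P y) := by
        simp only [klReal_eq_neg_mul_log_div, Finset.sum_neg_distrib, neg_neg, Finset.sum_mul, m]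
        exact Finset.sum_comm
    _ ≤ Real.log (maxPSum Q P) := neg_le.1 hgibbs

lemma capacity_le_log_maxPSum (hP : IsChannel P) (hQ : IsPMF Q) :
    capacity P {x | 0 < Q x} ≤ Real.log (maxPSum Q P) :=
  Real.sSup_le (by rintro _ ⟨Q', hQ', hsupp, rfl⟩; exact MI_le_log_maxPSum hP hQ hQ' hsupp)
    (Real.log_nonneg (one_le_maxPSum hP hQ))

theorem capacity_le_Rm1minus (hP : IsChannel P) (hQ : IsPMF Q) :
    ((capacity P {x | 0 < Q x} : ℝ) : EReal) ≤ Rm1minus Q P := by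
  refine le_sInf ?_
  rintro _ ⟨V, hV, hadm, rfl⟩
  rw [DTQ_eq_coe (absCont_Tm1_of_admissible hQ hadm), DTQReal_Tm1_eq hP hQ hV hadm,
    EReal.coe_le_coe_iff]
  linarith [capacity_le_log_maxPSum hP hQ,
    DQPReal_nonneg hP hQ (Tm1_pmf hP hQ) hV (absCont_Tm1_of_admissible hQ hadm)]

lemma Vm1_pmf (hQ : IsPMF Q) : IsCondPMF (Vm1 Q P) := fun y =>
  ⟨fun x => div_nonneg (argmaxQ_nonneg hQ y x) (sum_argmaxQ_pos hQ y).le, by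
    simp only [Vm1, ← Finset.sum_div]; exact div_self (sum_argmaxQ_pos hQ y).ne'⟩

lemma Vm1_admissible : AdmissibleAtM1 Q P (Vm1 Q P) := fun y x hx => by
  simp [Vm1, argmaxQ, IsArgmax, hx]

end

/-! ## Tilted distributions -/

section

variable {𝓧 𝓨 : Type*} [Fintype 𝓧] {P : 𝓧 → 𝓨 → ℝ} {Q : 𝓧 → ℝ} {ρ : ℝ}

-- `tiltT ρ`, `tiltV ρ` are the paper's `T_ρ`, `V_ρ`, and `tiltNorm ρ = exp (-E₀(ρ,Q))`.
noncomputable def tiltSum (Q : 𝓧 → ℝ) (P : 𝓧 → 𝓨 → ℝ) (ρ : ℝ) (y : 𝓨) : ℝ :=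
  ∑ x, Q x * P x y ^ (1 / (1 + ρ))

-- The `Q x` branch only keeps `tiltV` a conditional pmf on outputs `y` that `tiltT` ignores.
noncomputable def tiltV (Q : 𝓧 → ℝ) (P : 𝓧 → 𝓨 → ℝ) (ρ : ℝ) (y : 𝓨) (x : 𝓧) : ℝ :=
  if tiltSum Q P ρ y = 0 then Q x else Q x * P x y ^ (1 / (1 + ρ)) / tiltSum Q P ρ y

lemma tiltV_of_pos {y : 𝓨} (hg : 0 < tiltSum Q P ρ y) (x : 𝓧) :
    tiltV Q P ρ y x = Q x * P x y ^ (1 / (1 + ρ)) / tiltSum Q P ρ y :=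
  if_neg hg.ne'

lemma tiltV_eq_zero_of_Q_eq_zero {x : 𝓧} (hx : Q x = 0) (y : 𝓨) : tiltV Q P ρ y x = 0 := by
  simp [tiltV, hx]

lemma continuousOn_tiltSum (y : 𝓨) : ContinuousOn (fun ρ => tiltSum Q P ρ y) (Ioi (-1)) :=
  continuousOn_finsetSum _ fun _ _ => continuousOn_const.mul (continuousOn_rpow_one_div_one_add _)

lemma continuousOn_tiltSum_rpow (y : 𝓨) :
    ContinuousOn (fun ρ => tiltSum Q P ρ y ^ (1 + ρ)) (Ioi (-1)) :=
  (continuousOn_tiltSum y).rpow (continuousOn_const.add continuousOn_id)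
    fun ρ (hρ : -1 < ρ) => Or.inr (by linarith)

end

section

variable {𝓧 𝓨 : Type*} [Fintype 𝓧] [Fintype 𝓨] {P : 𝓧 → 𝓨 → ℝ} {Q : 𝓧 → ℝ}
  {T : 𝓨 → ℝ} {V : 𝓨 → 𝓧 → ℝ} {ρ : ℝ}

noncomputable def tiltNorm (Q : 𝓧 → ℝ) (P : 𝓧 → 𝓨 → ℝ) (ρ : ℝ) : ℝ :=
  ∑ y, tiltSum Q P ρ y ^ (1 + ρ)

noncomputable def tiltT (Q : 𝓧 → ℝ) (P : 𝓧 → 𝓨 → ℝ) (ρ : ℝ) (y : 𝓨) : ℝ :=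
  tiltSum Q P ρ y ^ (1 + ρ) / tiltNorm Q P ρ

noncomputable def tiltRate (Q : 𝓧 → ℝ) (P : 𝓧 → 𝓨 → ℝ) (ρ : ℝ) : ℝ :=
  DTQReal (tiltT Q P ρ) (tiltV Q P ρ) Q

lemma tiltSum_nonneg (hP : IsChannel P) (hQ : IsPMF Q) (ρ : ℝ) (y : 𝓨) : 0 ≤ tiltSum Q P ρ y :=
  Finset.sum_nonneg fun x _ => mul_nonneg (hQ.1 x) (Real.rpow_nonneg ((hP x).1 y) _)

lemma tiltSum_pos_iff (hρ : -1 < ρ) (hP : IsChannel P) (hQ : IsPMF Q) (y : 𝓨) :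
    0 < tiltSum Q P ρ y ↔ ∃ x, 0 < Q x ∧ 0 < P x y := by
  have hexp : 1 / (1 + ρ) ≠ 0 := by apply one_div_ne_zero; linarith
  rw [tiltSum, Finset.sum_pos_iff_of_nonneg fun x _ =>
    mul_nonneg (hQ.1 x) (Real.rpow_nonneg ((hP x).1 y) _)]
  simp only [Finset.mem_univ, true_and]
  refine exists_congr fun x =>
    ⟨fun h => ?_, fun ⟨hQx, hPx⟩ => mul_pos hQx (Real.rpow_pos_of_pos hPx _)⟩
  obtain ⟨hQx, hPx⟩ := pos_and_pos_of_mul_ne_zero (hQ.1 x)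
    (Real.rpow_nonneg ((hP x).1 y) _) h.ne'
  refine ⟨hQx, ((hP x).1 y).lt_of_ne' fun h0 => ?_⟩
  rw [h0, Real.zero_rpow hexp] at hPx
  exact hPx.false

lemma tiltSum_eq_zero (hρ : -1 < ρ) (hP : IsChannel P) (hQ : IsPMF Q) {y : 𝓨}
    (hy : ¬ ∃ x, 0 < Q x ∧ 0 < P x y) : tiltSum Q P ρ y = 0 :=
  (tiltSum_nonneg hP hQ ρ y).eq_of_not_lt' (mt (tiltSum_pos_iff hρ hP hQ y).1 hy)

lemma tiltNorm_pos (hρ : -1 < ρ) (hP : IsChannel P) (hQ : IsPMF Q) : 0 < tiltNorm Q P ρ := by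
  obtain ⟨x, hx⟩ := hQ.exists_pos
  obtain ⟨y, hy⟩ := (hP x).exists_pos
  exact Finset.sum_pos' (fun y _ => Real.rpow_nonneg (tiltSum_nonneg hP hQ ρ y) _)
    ⟨y, Finset.mem_univ y, Real.rpow_pos_of_pos ((tiltSum_pos_iff hρ hP hQ y).2 ⟨x, hx, hy⟩) _⟩

lemma tiltT_pmf (hρ : -1 < ρ) (hP : IsChannel P) (hQ : IsPMF Q) : IsPMF (tiltT Q P ρ) :=
  ⟨fun y => div_nonneg (Real.rpow_nonneg (tiltSum_nonneg hP hQ ρ y) _) (tiltNorm_pos hρ hP hQ).le,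
    by simp only [tiltT, ← Finset.sum_div]; exact div_self (tiltNorm_pos hρ hP hQ).ne'⟩

lemma tiltT_pos_iff (hρ : -1 < ρ) (hP : IsChannel P) (hQ : IsPMF Q) (y : 𝓨) :
    0 < tiltT Q P ρ y ↔ ∃ x, 0 < Q x ∧ 0 < P x y := by
  rw [tiltT, div_pos_iff_of_pos_right (tiltNorm_pos hρ hP hQ), ← tiltSum_pos_iff hρ hP hQ]
  refine ⟨fun h => (tiltSum_nonneg hP hQ ρ y).lt_of_ne' fun h0 => ?_,
    fun h => Real.rpow_pos_of_pos h _⟩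
  rw [h0, Real.zero_rpow (by linarith)] at h
  exact h.false

lemma tiltT_eq_zero (hρ : -1 < ρ) (hP : IsChannel P) (hQ : IsPMF Q) {y : 𝓨}
    (hy : ¬ ∃ x, 0 < Q x ∧ 0 < P x y) : tiltT Q P ρ y = 0 := by
  rw [tiltT, tiltSum_eq_zero hρ hP hQ hy, Real.zero_rpow (by linarith), zero_div]

lemma tiltV_pmf (hP : IsChannel P) (hQ : IsPMF Q) (ρ : ℝ) : IsCondPMF (tiltV Q P ρ) := by
  intro y
  by_cases hg : tiltSum Q P ρ y = 0
  · rwa [show tiltV Q P ρ y = Q from funext fun x => if_pos hg]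
  refine ⟨fun x => ?_, ?_⟩
  · rw [tiltV, if_neg hg]
    exact div_nonneg (mul_nonneg (hQ.1 x) (Real.rpow_nonneg ((hP x).1 y) _))
      (tiltSum_nonneg hP hQ ρ y)
  · simp only [tiltV, if_neg hg, ← Finset.sum_div]
    exact div_self hg

lemma tilt_joint_pos (hρ : -1 < ρ) (hP : IsChannel P) (hQ : IsPMF Q) {y : 𝓨} {x : 𝓧}
    (hx : 0 < Q x) (hy : 0 < P x y) : 0 < tiltT Q P ρ y * tiltV Q P ρ y x := by
  have hg := (tiltSum_pos_iff hρ hP hQ y).2 ⟨x, hx, hy⟩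
  rw [tiltV_of_pos hg]
  exact mul_pos ((tiltT_pos_iff hρ hP hQ y).2 ⟨x, hx, hy⟩)
    (div_pos (mul_pos hx (Real.rpow_pos_of_pos hy _)) hg)

lemma tilt_absCont (hρ : -1 < ρ) (hP : IsChannel P) (hQ : IsPMF Q) :
    AbsCont (tiltT Q P ρ) (tiltV Q P ρ) Q P := by
  intro y x h
  have hg := (tiltT_pos_iff hρ hP hQ y).1 ((tiltT_pmf hρ hP hQ).1 y |>.lt_of_ne'
    (left_ne_zero_of_mul h))
  have hV := right_ne_zero_of_mul h
  rw [tiltV_of_pos ((tiltSum_pos_iff hρ hP hQ y).2 hg)] at hV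
  refine mul_ne_zero (fun hQx => hV (by simp [hQx])) fun hPx => hV ?_
  rw [hPx, Real.zero_rpow (one_div_ne_zero (by linarith)), mul_zero, zero_div]

lemma E0_eq : E0 ρ Q P = -Real.log (tiltNorm Q P ρ) := rfl

lemma klReal_add_mul_klReal_eq (hρ : -1 < ρ) (hP : IsChannel P) (hQ : IsPMF Q) (hT : IsPMF T)
    (hV : IsCondPMF V) (hac : AbsCont T V Q P) (y : 𝓨) (x : 𝓧) :
    klReal (T y * V y x) (Q x * P x y) + ρ * klReal (T y * V y x) (T y * Q x) =
      (1 + ρ) * klReal (T y * V y x) (tiltT Q P ρ y * tiltV Q P ρ y x)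
        - ρ * (V y x * klReal (T y) (tiltT Q P ρ y)) + T y * V y x * E0 ρ Q P := by
  by_cases hs : T y * V y x = 0
  · rcases mul_eq_zero.1 hs with h | h <;> simp [h]
  obtain ⟨hTy, hVx⟩ := pos_and_pos_of_mul_ne_zero (hT.1 y) ((hV y).1 x) hs
  obtain ⟨hQx, hPx⟩ := pos_and_pos_of_mul_ne_zero (hQ.1 x) ((hP x).1 y) (hac y x hs)
  have hg := (tiltSum_pos_iff hρ hP hQ y).2 ⟨x, hQx, hPx⟩
  have hG := tiltNorm_pos hρ hP hQ
  have hβ : 1 + ρ ≠ 0 := by linarith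
  have hTρ := (tiltT_pos_iff hρ hP hQ y).2 ⟨x, hQx, hPx⟩
  have hVρ : 0 < tiltV Q P ρ y x := by rw [tiltV_of_pos hg]; positivity
  have hlogT : Real.log (tiltT Q P ρ y) =
      (1 + ρ) * Real.log (tiltSum Q P ρ y) - Real.log (tiltNorm Q P ρ) := by
    rw [tiltT, Real.log_div (by positivity) hG.ne', Real.log_rpow hg]
  have hlogV : Real.log (tiltV Q P ρ y x) =
      Real.log (Q x) + Real.log (P x y) / (1 + ρ) - Real.log (tiltSum Q P ρ y) := by
    rw [tiltV_of_pos hg, Real.log_div (by positivity) hg.ne', Real.log_mul hQx.ne' (by positivity),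
      Real.log_rpow hPx]
    ring
  rw [klReal_of_ne_zero hs, klReal_of_ne_zero hs, klReal_of_ne_zero hs, klReal_of_ne_zero hTy.ne',
    Real.log_div hs (by positivity), Real.log_div hs (by positivity),
    Real.log_div hs (by positivity), Real.log_div hTy.ne' hTρ.ne', Real.log_mul hTρ.ne' hVρ.ne',
    hlogT, hlogV, Real.log_mul hTy.ne' hVx.ne', Real.log_mul hTy.ne' hQx.ne',
    Real.log_mul hQx.ne' hPx.ne', E0_eq]
  field_simp
  ring

lemma DQPReal_add_mul_DTQReal (hρ : -1 < ρ) (hP : IsChannel P) (hQ : IsPMF Q) (hT : IsPMF T)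
    (hV : IsCondPMF V) (hac : AbsCont T V Q P) :
    DQPReal T V Q P + ρ * DTQReal T V Q = E0 ρ Q P
      + (1 + ρ) * ∑ y, ∑ x, klReal (T y * V y x) (tiltT Q P ρ y * tiltV Q P ρ y x)
      - ρ * ∑ y, klReal (T y) (tiltT Q P ρ y) := by
  have h := Finset.sum_congr rfl fun y (_ : y ∈ Finset.univ) => Finset.sum_congr rfl
    fun x (_ : x ∈ Finset.univ) => klReal_add_mul_klReal_eq hρ hP hQ hT hV hac y x
  simp only [Finset.sum_add_distrib, Finset.sum_sub_distrib, ← Finset.mul_sum, ← Finset.sum_mul,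
    (hV _).2, one_mul, mul_one, hT.2] at h
  rw [DQPReal, DTQReal, h]
  ring

lemma tiltT_ne_zero_of_absCont (hρ : -1 < ρ) (hP : IsChannel P) (hQ : IsPMF Q)
    (hV : IsCondPMF V) (hac : AbsCont T V Q P) {y : 𝓨} (hy : T y ≠ 0) : tiltT Q P ρ y ≠ 0 := by
  have hVy : ∑ x, V y x ≠ 0 := by rw [(hV y).2]; exact one_ne_zero
  obtain ⟨x, -, hx⟩ := Finset.exists_ne_zero_of_sum_ne_zero hVy
  obtain ⟨hQx, hPx⟩ :=
    pos_and_pos_of_mul_ne_zero (hQ.1 x) ((hP x).1 y) (hac y x (mul_ne_zero hy hx))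
  exact ((tiltT_pos_iff hρ hP hQ y).2 ⟨x, hQx, hPx⟩).ne'

lemma sum_klReal_tiltT_nonneg (hρ : -1 < ρ) (hP : IsChannel P) (hQ : IsPMF Q) (hT : IsPMF T)
    (hV : IsCondPMF V) (hac : AbsCont T V Q P) : 0 ≤ ∑ y, klReal (T y) (tiltT Q P ρ y) :=
  sum_klReal_nonneg hT.1 (tiltT_pmf hρ hP hQ).1
    (fun _ => tiltT_ne_zero_of_absCont hρ hP hQ hV hac) (by rw [hT.2, (tiltT_pmf hρ hP hQ).2])

lemma tilt_joint_ne_zero_of_absCont (hρ : -1 < ρ) (hP : IsChannel P) (hQ : IsPMF Q)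
    (hac : AbsCont T V Q P) (y : 𝓨) (x : 𝓧) (h : T y * V y x ≠ 0) :
    tiltT Q P ρ y * tiltV Q P ρ y x ≠ 0 := by
  obtain ⟨hQx, hPx⟩ := pos_and_pos_of_mul_ne_zero (hQ.1 x) ((hP x).1 y) (hac y x h)
  exact (tilt_joint_pos hρ hP hQ hQx hPx).ne'

lemma sum_sum_joint_tilt_eq_one (hρ : -1 < ρ) (hP : IsChannel P) (hQ : IsPMF Q) :
    ∑ y, ∑ x, tiltT Q P ρ y * tiltV Q P ρ y x = 1 :=
  sum_sum_joint_eq_one (tiltT_pmf hρ hP hQ) (tiltV_pmf hP hQ ρ)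

lemma E0_sub_mul_add_le (hρ : -1 < ρ) (hρ0 : ρ ≤ 0) (hP : IsChannel P) (hQ : IsPMF Q)
    (hT : IsPMF T) (hV : IsCondPMF V) (hac : AbsCont T V Q P) (R : ℝ) :
    E0 ρ Q P - ρ * R
      + (1 + ρ) * ∑ y, ∑ x, klReal (T y * V y x) (tiltT Q P ρ y * tiltV Q P ρ y x)
      ≤ DQPReal T V Q P + max (R - DTQReal T V Q) 0 := by
  have hid := DQPReal_add_mul_DTQReal hρ hP hQ hT hV hac
  have hB := sum_klReal_tiltT_nonneg hρ hP hQ hT hV hac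
  have hmax : -ρ * (R - DTQReal T V Q) ≤ max (R - DTQReal T V Q) 0 := by
    rcases le_total (R - DTQReal T V Q) 0 with h | h
    · exact (mul_nonpos_of_nonneg_of_nonpos (by linarith) h).trans (le_max_right _ _)
    · exact (by nlinarith : -ρ * (R - DTQReal T V Q) ≤ R - DTQReal T V Q).trans (le_max_left _ _)
  nlinarith

lemma E0_sub_mul_le_ecMLObjective (hρ : -1 < ρ) (hρ0 : ρ ≤ 0) (hP : IsChannel P)
    (hQ : IsPMF Q) (hT : IsPMF T) (hV : IsCondPMF V) (R : ℝ) :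
    ((E0 ρ Q P - ρ * R : ℝ) : EReal) ≤ ecMLObjective R Q P T V := by
  by_cases hac : AbsCont T V Q P
  · rw [ecMLObjective_eq_coe R hac, EReal.coe_le_coe_iff]
    have hJ := sum_sum_klReal_nonneg (joint_nonneg hT hV) (joint_nonneg (tiltT_pmf hρ hP hQ)
      (tiltV_pmf hP hQ ρ)) (tilt_joint_ne_zero_of_absCont hρ hP hQ hac)
      (by rw [sum_sum_joint_eq_one hT hV, sum_sum_joint_tilt_eq_one hρ hP hQ])
    nlinarith [E0_sub_mul_add_le hρ hρ0 hP hQ hT hV hac R]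
  · rw [ecMLObjective_eq_top R hac]
    exact le_top

lemma joint_eq_tilt_of_ecMLObjective_eq (hρ : -1 < ρ) (hρ0 : ρ ≤ 0) (hP : IsChannel P)
    (hQ : IsPMF Q) (hT : IsPMF T) (hV : IsCondPMF V) {R : ℝ}
    (h : ecMLObjective R Q P T V = ((E0 ρ Q P - ρ * R : ℝ) : EReal)) (x : 𝓧) (y : 𝓨) :
    T y * V y x = tiltT Q P ρ y * tiltV Q P ρ y x := by
  have hac : AbsCont T V Q P := by
    by_contra hac
    rw [ecMLObjective_eq_top R hac] at h
    exact EReal.coe_ne_top _ h.symm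
  rw [ecMLObjective_eq_coe R hac, EReal.coe_eq_coe_iff] at h
  have hJ : ∑ y, ∑ x, klReal (T y * V y x) (tiltT Q P ρ y * tiltV Q P ρ y x) ≤ 0 := by
    nlinarith [E0_sub_mul_add_le hρ hρ0 hP hQ hT hV hac R]
  exact congrFun₂ (eq_of_sum_sum_klReal_nonpos (joint_nonneg hT hV) (joint_nonneg
    (tiltT_pmf hρ hP hQ) (tiltV_pmf hP hQ ρ)) (tilt_joint_ne_zero_of_absCont hρ hP hQ hac)
    (by rw [sum_sum_joint_eq_one hT hV, sum_sum_joint_tilt_eq_one hρ hP hQ]) hJ) y x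

lemma DQP_tilt (hρ : -1 < ρ) (hP : IsChannel P) (hQ : IsPMF Q) :
    DQP (tiltT Q P ρ) (tiltV Q P ρ) Q P = ((E0 ρ Q P - ρ * tiltRate Q P ρ : ℝ) : EReal) := by
  have h := DQPReal_add_mul_DTQReal hρ hP hQ (tiltT_pmf hρ hP hQ) (tiltV_pmf hP hQ ρ)
    (tilt_absCont hρ hP hQ)
  simp only [klReal_self, Finset.sum_const_zero, mul_zero, add_zero, sub_zero] at h
  rw [DQP_eq_coe (tilt_absCont hρ hP hQ), tiltRate, ← h]
  ring_nf

lemma DTQ_tilt (hρ : -1 < ρ) (hP : IsChannel P) (hQ : IsPMF Q) :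
    DTQ (tiltT Q P ρ) (tiltV Q P ρ) Q = tiltRate Q P ρ :=
  DTQ_eq_coe (tilt_absCont hρ hP hQ)

lemma sum_tilt_joint_pos_iff (hρ : -1 < ρ) (hP : IsChannel P) (hQ : IsPMF Q) (x : 𝓧) :
    0 < ∑ y, tiltT Q P ρ y * tiltV Q P ρ y x ↔ 0 < Q x := by
  have hnonneg : ∀ y, 0 ≤ tiltT Q P ρ y * tiltV Q P ρ y x := fun y =>
    joint_nonneg (tiltT_pmf hρ hP hQ) (tiltV_pmf hP hQ ρ) y x
  refine ⟨fun h => (hQ.1 x).lt_of_ne' fun hQx => ?_, fun hQx => ?_⟩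
  · simp [tiltV_eq_zero_of_Q_eq_zero hQx] at h
  · obtain ⟨y, hy⟩ := (hP x).exists_pos
    exact Finset.sum_pos' (fun y _ => hnonneg y)
      ⟨y, Finset.mem_univ y, tilt_joint_pos hρ hP hQ hQx hy⟩

lemma tiltRate_zero (hP : IsChannel P) (hQ : IsPMF Q) : tiltRate Q P 0 = MI Q P := by
  refine DTQReal_eq_MI hP hQ (tiltV_pmf hP hQ 0) fun y x => ?_
  have hβ : (1 : ℝ) + 0 = 1 := add_zero 1
  have hnorm : tiltNorm Q P 0 = 1 := by
    simpa [tiltNorm, tiltSum, hβ] using sum_sum_QP_eq_one hP hQ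
  by_cases hg : tiltSum Q P 0 y = 0
  · have h := Finset.sum_eq_zero_iff_of_nonneg (fun a _ => QP_nonneg hP hQ y a) |>.1
      (by simpa [tiltSum, hβ] using hg) x (Finset.mem_univ x)
    simp [tiltT, hg, h]
  · simp only [tiltT, tiltV, if_neg hg, hnorm, hβ, Real.rpow_one, div_one]
    field_simp

/-! ## The limit `ρ → −1⁺` and the choice of `ρ` -/

lemma lt_DTQReal_Tm1_Vm1 (hP : IsChannel P) (hQ : IsPMF Q) {R : ℝ} (hMI : MI Q P < R)
    (hRC : R ≤ capacity P {x | 0 < Q x}) : R < DTQReal (Tm1 Q P) (Vm1 Q P) Q := by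
  have hac := absCont_Tm1_of_admissible hQ (Vm1_admissible (P := P))
  have hid := DTQReal_Tm1_eq hP hQ (Vm1_pmf hQ) Vm1_admissible
  have hD := DQPReal_nonneg hP hQ (Tm1_pmf hP hQ) (Vm1_pmf hQ) hac
  have hcap := capacity_le_log_maxPSum hP hQ
  -- Otherwise `D(T_{−1}∘V_{−1}‖Q∘P) = 0`, so `T_{−1}∘V_{−1} = Q∘P` and the limit is `I(Q∘P) < R`.
  by_contra! h
  have hjoint := joint_eq_QP_of_DQPReal_nonpos hP hQ (Tm1_pmf hP hQ) (Vm1_pmf hQ) hac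
    (by linarith)
  linarith [DTQReal_eq_MI hP hQ (Vm1_pmf hQ) hjoint]

lemma tiltRate_eq_sum :
    tiltRate Q P = fun ρ => ∑ y, tiltT Q P ρ y * ∑ x, klReal (tiltV Q P ρ y x) (Q x) :=
  funext fun _ => DTQReal_eq_sum _ _ _

lemma continuousOn_tiltT (hP : IsChannel P) (hQ : IsPMF Q) (y : 𝓨) :
    ContinuousOn (fun ρ => tiltT Q P ρ y) (Ioi (-1)) :=
  (continuousOn_tiltSum_rpow y).div
    (continuousOn_finsetSum _ fun y _ => continuousOn_tiltSum_rpow y)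
    fun _ hρ => (tiltNorm_pos hρ hP hQ).ne'

lemma continuousOn_tiltV (hP : IsChannel P) (hQ : IsPMF Q) (y : 𝓨) (x : 𝓧) :
    ContinuousOn (fun ρ => tiltV Q P ρ y x) (Ioi (-1)) := by
  by_cases hy : ∃ x, 0 < Q x ∧ 0 < P x y
  · have hg : ∀ ρ ∈ Ioi (-1 : ℝ), 0 < tiltSum Q P ρ y := fun ρ hρ =>
      (tiltSum_pos_iff hρ hP hQ y).2 hy
    refine ContinuousOn.congr ?_ fun ρ hρ => tiltV_of_pos (hg ρ hρ) x
    exact (continuousOn_const.mul (continuousOn_rpow_one_div_one_add _)).div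
      (continuousOn_tiltSum y) fun ρ hρ => (hg ρ hρ).ne'
  · exact continuousOn_const.congr fun ρ hρ => if_pos (tiltSum_eq_zero hρ hP hQ hy)

lemma continuousOn_tiltRate (hP : IsChannel P) (hQ : IsPMF Q) :
    ContinuousOn (tiltRate Q P) (Ioi (-1)) := by
  rw [tiltRate_eq_sum]
  exact continuousOn_finsetSum _ fun y _ => (continuousOn_tiltT hP hQ y).mul
    (continuousOn_finsetSum _ fun x _ =>
      (continuous_klReal_left (Q x)).comp_continuousOn (continuousOn_tiltV hP hQ y x))

lemma tendsto_tiltSum_rpow (hP : IsChannel P) (hQ : IsPMF Q) (y : 𝓨) :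
    Tendsto (fun ρ => tiltSum Q P ρ y ^ (1 + ρ)) (𝓝[>] (-1)) (𝓝 (maxP Q P y)) := by
  obtain ⟨a, ha, hPa⟩ := exists_isArgmax (P := P) hQ y
  have hM := maxP_nonneg hP hQ y
  have hlo : ∀ ρ ∈ Ioi (-1 : ℝ), Q a ^ (1 + ρ) * maxP Q P y ≤ tiltSum Q P ρ y ^ (1 + ρ) := by
    intro ρ (hρ : -1 < ρ)
    have hterm : Q a * P a y ^ (1 / (1 + ρ)) ≤ tiltSum Q P ρ y :=
      Finset.single_le_sum (f := fun b => Q b * P b y ^ (1 / (1 + ρ)))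
        (fun b _ => mul_nonneg (hQ.1 b) (Real.rpow_nonneg ((hP b).1 y) _)) (Finset.mem_univ a)
    have h := Real.rpow_le_rpow (mul_nonneg (hQ.1 a) (Real.rpow_nonneg ((hP a).1 y) _)) hterm
      (by linarith : 0 ≤ 1 + ρ)
    rwa [hPa, Real.mul_rpow (hQ.1 a) (Real.rpow_nonneg hM _), ← Real.rpow_mul hM,
      one_div_mul_cancel (by linarith), Real.rpow_one] at h
  have hhi : ∀ ρ ∈ Ioi (-1 : ℝ), tiltSum Q P ρ y ^ (1 + ρ) ≤ maxP Q P y := by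
    intro ρ (hρ : -1 < ρ)
    have hsum : tiltSum Q P ρ y ≤ maxP Q P y ^ (1 / (1 + ρ)) := by
      calc tiltSum Q P ρ y ≤ ∑ x, Q x * maxP Q P y ^ (1 / (1 + ρ)) := by
            refine Finset.sum_le_sum fun x _ => ?_
            rcases (hQ.1 x).eq_or_lt with hx | hx
            · simp [← hx]
            · gcongr
              · exact (hP x).1 y
              · exact one_div_nonneg.2 (by linarith)
              · exact le_maxP hQ hx y
        _ = maxP Q P y ^ (1 / (1 + ρ)) := by rw [← Finset.sum_mul, hQ.2, one_mul]
    have h := Real.rpow_le_rpow (tiltSum_nonneg hP hQ ρ y) hsum (by linarith : 0 ≤ 1 + ρ)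
    rwa [← Real.rpow_mul hM, one_div_mul_cancel (by linarith), Real.rpow_one] at h
  refine tendsto_of_tendsto_of_tendsto_of_le_of_le' ?_ tendsto_const_nhds
    (eventually_mem_nhdsWithin.mono hlo) (eventually_mem_nhdsWithin.mono hhi)
  simpa using (tendsto_rpow_one_add ha.1).mul_const (maxP Q P y)

lemma tendsto_tiltT (hP : IsChannel P) (hQ : IsPMF Q) (y : 𝓨) :
    Tendsto (fun ρ => tiltT Q P ρ y) (𝓝[>] (-1)) (𝓝 (Tm1 Q P y)) :=
  (tendsto_tiltSum_rpow hP hQ y).div (tendsto_finsetSum _ fun y _ => tendsto_tiltSum_rpow hP hQ y)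
    (maxPSum_pos hP hQ).ne'

lemma tendsto_Q_mul_rpow_div_maxP (hP : IsChannel P) (hQ : IsPMF Q) {y : 𝓨}
    (hM : 0 < maxP Q P y) (x : 𝓧) :
    Tendsto (fun ρ : ℝ => Q x * (P x y / maxP Q P y) ^ (1 / (1 + ρ))) (𝓝[>] (-1))
      (𝓝 (argmaxQ Q P y x)) := by
  rcases (hQ.1 x).eq_or_lt with hx | hx
  · simp [argmaxQ, IsArgmax, ← hx]
  have h := (tendsto_rpow_one_div_one_add (div_nonneg ((hP x).1 y) hM.le)
    ((div_le_one hM).2 (le_maxP hQ hx y))).const_mul (Q x)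
  convert h using 2
  simp [argmaxQ, isArgmax_iff hQ hx, div_eq_one_iff_eq hM.ne']

lemma tendsto_tiltV (hP : IsChannel P) (hQ : IsPMF Q) {y : 𝓨} (hy : ∃ x, 0 < Q x ∧ 0 < P x y)
    (x : 𝓧) : Tendsto (fun ρ => tiltV Q P ρ y x) (𝓝[>] (-1)) (𝓝 (Vm1 Q P y x)) := by
  have hM := (maxP_pos_iff hQ y).2 hy
  refine ((tendsto_Q_mul_rpow_div_maxP hP hQ hM x).div (tendsto_finsetSum _ fun a _ =>
    tendsto_Q_mul_rpow_div_maxP hP hQ hM a) (sum_argmaxQ_pos hQ y).ne').congr' ?_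
  refine eventually_mem_nhdsWithin.mono fun ρ (hρ : -1 < ρ) => ?_
  show Q x * _ / ∑ a, _ = tiltV Q P ρ y x
  rw [tiltV_of_pos ((tiltSum_pos_iff hρ hP hQ y).2 hy), tiltSum]
  simp only [Real.div_rpow ((hP _).1 y) hM.le, mul_div_assoc', ← Finset.sum_div]
  rw [div_div_div_cancel_right₀ (Real.rpow_pos_of_pos hM _).ne']

lemma tendsto_tiltRate (hP : IsChannel P) (hQ : IsPMF Q) :
    Tendsto (tiltRate Q P) (𝓝[>] (-1)) (𝓝 (DTQReal (Tm1 Q P) (Vm1 Q P) Q)) := by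
  rw [tiltRate_eq_sum, DTQReal_eq_sum]
  refine tendsto_finsetSum _ fun y _ => ?_
  by_cases hy : ∃ x, 0 < Q x ∧ 0 < P x y
  · exact (tendsto_tiltT hP hQ y).mul (tendsto_finsetSum _ fun x _ =>
      ((continuous_klReal_left (Q x)).tendsto _).comp (tendsto_tiltV hP hQ hy x))
  · have hT : Tm1 Q P y = 0 := by
      rw [Tm1_apply, (maxP_nonneg hP hQ y).eq_of_not_lt' (mt (maxP_pos_iff hQ y).1 hy), zero_div]
    rw [hT, zero_mul]
    exact tendsto_const_nhds.congr' (eventually_mem_nhdsWithin.mono fun ρ hρ => by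
      simp [tiltT_eq_zero hρ hP hQ hy])

lemma exists_tilt_param (hP : IsChannel P) (hQ : IsPMF Q) {R : ℝ}
    (hRC : R ≤ capacity P {x | 0 < Q x}) :
    ∃ ρ, -1 < ρ ∧ ρ ≤ 0 ∧ R ≤ tiltRate Q P ρ ∧ ρ * R = ρ * tiltRate Q P ρ := by
  rcases le_or_gt R (MI Q P) with hR | hR
  · exact ⟨0, by norm_num, le_rfl, tiltRate_zero hP hQ ▸ hR, by simp⟩
  obtain ⟨ρ₁, hR₁, hρ₁⟩ := (((tendsto_tiltRate hP hQ).eventually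
    (eventually_gt_nhds (lt_DTQReal_Tm1_Vm1 hP hQ hR hRC))).and
    (Ioo_mem_nhdsGT (by norm_num : (-1 : ℝ) < 0))).exists
  obtain ⟨ρ, hρ, hρR⟩ := intermediate_value_Icc' hρ₁.2.le
    ((continuousOn_tiltRate hP hQ).mono fun z hz => hρ₁.1.trans_le hz.1)
    ⟨(tiltRate_zero hP hQ).symm ▸ hR.le, hR₁.le⟩
  exact ⟨ρ, hρ₁.1.trans_le hρ.1, hρ.2, hρR.ge, by rw [hρR]⟩

end

theorem stmt_15_general {𝓧 𝓨 : Type*} [Fintype 𝓧] [Fintype 𝓨]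
    (P : 𝓧 → 𝓨 → ℝ) (hP : IsChannel P) (Q : 𝓧 → ℝ) (hQ : IsPMF Q)
    (R : ℝ) (hRC : R ≤ capacity P {x | 0 < Q x}) :
    ((capacity P {x | 0 < Q x} : ℝ) : EReal) ≤ Rm1minus Q P
    ∧ Ec R Q P = EcML R Q P
    ∧ ∃ T : 𝓨 → ℝ, ∃ V : 𝓨 → 𝓧 → ℝ, IsPMF T ∧ IsCondPMF V ∧
        DQP T V Q P + max ((R : EReal) - DTQ T V Q) 0 = EcML R Q P ∧
        (∀ (T' : 𝓨 → ℝ) (V' : 𝓨 → 𝓧 → ℝ), IsPMF T' → IsCondPMF V' →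
          DQP T' V' Q P + max ((R : EReal) - DTQ T' V' Q) 0 = EcML R Q P →
          ∀ x y, T' y * V' y x = T y * V y x) ∧
        ((R : EReal) ≤ DTQ T V Q ∧ DQP T V Q P = Ec R Q P) ∧
        (∀ x, (0 < ∑ y, T y * V y x) ↔ 0 < Q x) := by
  obtain ⟨ρ, hρ, hρ0, hRρ, hslack⟩ := exists_tilt_param hP hQ hRC
  have hT := tiltT_pmf hρ hP hQ
  have hV := tiltV_pmf hP hQ ρ
  have hR : (R : EReal) ≤ DTQ (tiltT Q P ρ) (tiltV Q P ρ) Q := by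
    rw [DTQ_tilt hρ hP hQ]
    exact EReal.coe_le_coe hRρ
  have hval : DQP (tiltT Q P ρ) (tiltV Q P ρ) Q P = ((E0 ρ Q P - ρ * R : ℝ) : EReal) := by
    rw [DQP_tilt hρ hP hQ, hslack]
  obtain ⟨hML, hEc⟩ := EcML_eq_and_Ec_eq hT hV hR fun T' V' hT' hV' =>
    hval ▸ E0_sub_mul_le_ecMLObjective hρ hρ0 hP hQ hT' hV' R
  refine ⟨capacity_le_Rm1minus hP hQ, hEc.trans hML.symm, _, _, hT, hV,
    (ecMLObjective_of_le hR).trans hML.symm, fun T' V' hT' hV' h x y => ?_, ⟨hR, hEc.symm⟩,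
    sum_tilt_joint_pos_iff hρ hP hQ⟩
  exact joint_eq_tilt_of_ecMLObjective_eq hρ hρ0 hP hQ hT' hV' (h.trans (hML.trans hval)) x y

theorem stmt_15 {𝓧 𝓨 : Type*} [Fintype 𝓧] [Fintype 𝓨] [Nonempty 𝓧] [Nonempty 𝓨]
    (P : 𝓧 → 𝓨 → ℝ) (hP : IsChannel P) (Q : 𝓧 → ℝ) (hQ : IsPMF Q)
    (R : ℝ) (hR0 : 0 ≤ R) (hRC : R ≤ capacity P {x | 0 < Q x}) :
    ((capacity P {x | 0 < Q x} : ℝ) : EReal) ≤ Rm1minus Q P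
    ∧ Ec R Q P = EcML R Q P
    ∧ ∃ T : 𝓨 → ℝ, ∃ V : 𝓨 → 𝓧 → ℝ, IsPMF T ∧ IsCondPMF V ∧
        DQP T V Q P + max ((R : EReal) - DTQ T V Q) 0 = EcML R Q P ∧
        (∀ (T' : 𝓨 → ℝ) (V' : 𝓨 → 𝓧 → ℝ), IsPMF T' → IsCondPMF V' →
          DQP T' V' Q P + max ((R : EReal) - DTQ T' V' Q) 0 = EcML R Q P →
          ∀ x y, T' y * V' y x = T y * V y x) ∧
        ((R : EReal) ≤ DTQ T V Q ∧ DQP T V Q P = Ec R Q P) ∧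
        (∀ x, (0 < ∑ y, T y * V y x) ↔ 0 < Q x) :=
  stmt_15_general P hP Q hQ R hRC
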